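/- arXiv:2603.24256 — 3 statements merged into one kernel-verified Lean document; each statement's English description precedes it below -/
import Mathlib

section
/- Let n = (n_1, ..., n_ℓ) be a tuple of positive integers with gcd(n_1, ..., n_ℓ) = 1, and let |n| = n_1 + ... + n_ℓ. Then for every positive integer k, the multinomial coefficient (k|n|)! / ∏_i (k n_i)! is divisible by |n|. -/
/-
Since `n_j · C(N, n_j) = N · C(N - 1, n_j - 1)`, peeling off the `j`-th factor of a multinomial
coefficient shows that `|m|` divides `m_j · multinomial(m)` for every `j`, hence divides
`gcd(m) · multinomial(m)`. For `m = k n` this reads `k|n| ∣ k · multinomial(k n)`.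
-/

namespace Nat

theorem dvd_mul_choose (n k : ℕ) : n ∣ k * n.choose k := by
  rcases n with _ | n <;> rcases k with _ | k
  · simp
  · simp
  · simp
  · exact ⟨n.choose k, by rw [mul_comm, ← add_one_mul_choose_eq]⟩

theorem sum_dvd_mul_multinomial {α : Type*} {s : Finset α} (f : α → ℕ) {a : α} (ha : a ∈ s) :
    (∑ i ∈ s, f i) ∣ f a * multinomial s f := by
  classical
  rw [← Finset.insert_erase ha, multinomial_insert (Finset.notMem_erase a s),
    Finset.sum_insert (Finset.notMem_erase a s), ← mul_assoc]
  exact Dvd.dvd.mul_right (dvd_mul_choose _ _) _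

theorem sum_dvd_gcd_mul_multinomial {α : Type*} (s : Finset α) (f : α → ℕ) :
    (∑ i ∈ s, f i) ∣ s.gcd f * multinomial s f := by
  have h : (∑ i ∈ s, f i) ∣ s.gcd fun a => f a * multinomial s f :=
    Finset.dvd_gcd fun a ha => sum_dvd_mul_multinomial f ha
  rwa [Finset.gcd_mul_right, normalize_eq] at h

end Nat

theorem stmt_2_general (ℓ : ℕ) (n : Fin ℓ → ℕ)
    (hgcd : Finset.univ.gcd n = 1) (k : ℕ) (hk : 0 < k) :
    (∑ i, n i) ∣ Nat.multinomial Finset.univ fun i => k * n i := by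
  have h := Nat.sum_dvd_gcd_mul_multinomial Finset.univ fun i => k * n i
  rw [← Finset.mul_sum, Finset.gcd_mul_left, hgcd, normalize_eq, mul_one] at h
  exact Nat.dvd_of_mul_dvd_mul_left hk h

/-- If `n = (n_1, …, n_ℓ)` are positive integers with `gcd(n_1, …, n_ℓ) = 1` and
`|n| = n_1 + ⋯ + n_ℓ`, then for every positive integer `k` the multinomial coefficient
`(k|n|)! / ∏_i (k n_i)!` is divisible by `|n|`. -/
theorem stmt_2 (ℓ : ℕ) (n : Fin ℓ → ℕ) (hpos : ∀ i, 0 < n i)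
    (hgcd : Finset.univ.gcd n = 1) (k : ℕ) (hk : 0 < k) :
    (∑ i, n i) ∣ Nat.multinomial Finset.univ fun i => k * n i :=
  stmt_2_general ℓ n hgcd k hk
end

section
/- Let R be a commutative ring with Adams operations Ψ_k (ring endomorphisms with Ψ_1 = id, Ψ_k Ψ_m = Ψ_{km}, and Ψ_p(x) ≡ x^p mod p for all primes p). Let n = (n_1,...,n_ℓ) be positive integers with gcd = 1, G ∈ R, and k ≥ 1. Then the element ∑_{k'|k} μ(k/k') · ((k'|n|)! / ∏_i (k' n_i)!) · (Ψ_{k/k'} G)^{k'} of R is divisible by k·|n| in R, i.e., lies in k|n|·R. -/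
/-!
Work one prime `p` at a time, writing `M(e)` for the multinomial coefficient of `e • n`. First,
`|n|` divides every `M(e)`: `e|n|` divides `M(e) · e nᵢ` for each `i`, hence `M(e) · e gcd n`.
This settles the primes `p ∤ k`. For `p ∣ k`, the Möbius function pairs the divisor `t` of `k`
(with `p ∤ t`) with `p t` and kills all other terms, leaving `M(pe) Xᵖᵉ - M(e) (Ψ_p X)ᵉ` with
`X = Ψ_t G` and `k = p t e`. The congruence `Ψ_p X ≡ Xᵖ mod p` lifts to
`Xᵖᵉ ≡ (Ψ_p X)ᵉ mod p^(v_p(e)+1)`, and comparing coefficients of `(1 + X)^(pN)` and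
`(1 + Xᵖ)^N` gives `M(pe) ≡ M(e) mod p^(v_p(e|n|)+1)`.
-/

open ArithmeticFunction Finset

namespace Nat

theorem dvd_choose_mul (n k : ℕ) : n ∣ n.choose k * k := by
  rcases n with _ | n
  · rcases k with _ | k <;> simp
  rcases k with _ | k
  · simp
  exact ⟨_, (add_one_mul_choose_eq n k).symm⟩

variable {ι : Type*} {s : Finset ι} {f : ι → ℕ}

theorem sum_dvd_multinomial_mul {a : ι} (ha : a ∈ s) :
    (∑ i ∈ s, f i) ∣ multinomial s f * f a := by
  classical
  rw [← insert_erase ha, multinomial_insert (notMem_erase a s), sum_insert (notMem_erase a s),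
    mul_right_comm]
  exact (dvd_choose_mul _ _).mul_right _

theorem sum_dvd_multinomial_mul_gcd : (∑ i ∈ s, f i) ∣ multinomial s f * s.gcd f := by
  rw [← normalize_eq (multinomial s f), ← Finset.gcd_mul_left]
  exact Finset.dvd_gcd fun i hi => sum_dvd_multinomial_mul hi

theorem sum_ne_zero_of_gcd_eq_one (h : s.gcd f = 1) : ∑ i ∈ s, f i ≠ 0 := by
  rw [Ne, sum_eq_zero_iff, ← Finset.gcd_eq_zero_iff, h]
  exact one_ne_zero

theorem sum_dvd_multinomial_mul_of_gcd_eq_one (h : s.gcd f = 1) {e : ℕ} (he : e ≠ 0) :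
    (∑ i ∈ s, f i) ∣ multinomial s fun i => e * f i := by
  have := sum_dvd_multinomial_mul_gcd (s := s) (f := fun i => e * f i)
  rw [← Finset.mul_sum, Finset.gcd_mul_left, normalize_eq, h, mul_one, mul_comm] at this
  exact Nat.dvd_of_mul_dvd_mul_right (Nat.pos_of_ne_zero he) this

theorem exists_pow_dvd_and_pow_dvd_mul_pow {p j c m : ℕ} (hp : p.Prime) (h : p ^ j ∣ c * m) :
    ∃ i, p ^ i ∣ m ∧ p ^ j ∣ c * p ^ i := by
  obtain ⟨i, -, hi⟩ := (Nat.dvd_prime_pow hp).1 (Nat.gcd_dvd_left (p ^ j) m)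
  refine ⟨i, hi ▸ Nat.gcd_dvd_right _ _, ?_⟩
  rw [← hi, ← Nat.gcd_mul_left]
  exact Nat.dvd_gcd (dvd_mul_left _ _) h

end Nat

theorem pow_succ_dvd_pow_sub_pow {R : Type*} [CommRing R] {p j N : ℕ} {x y : R}
    (h : (p : R) ∣ x - y) (hN : p ^ j ∣ N) : (p : R) ^ (j + 1) ∣ x ^ N - y ^ N := by
  obtain ⟨m, rfl⟩ := hN
  rw [pow_mul, pow_mul]
  exact (dvd_sub_pow_of_dvd_sub h j).trans (sub_dvd_pow_sub_pow _ _ m)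

open Polynomial in
theorem Nat.pow_succ_dvd_choose_mul_sub_choose {p j N : ℕ} (hp : p.Prime) (hN : p ^ j ∣ N)
    (K : ℕ) : (p : ℤ) ^ (j + 1) ∣ ((p * N).choose (p * K) : ℤ) - N.choose K := by
  have hfrob : (p : ℤ[X]) ∣ (X + 1) ^ p - expand ℤ p (X + 1) := by
    obtain ⟨r, hr⟩ := exists_add_pow_prime_eq hp (X : ℤ[X]) 1
    exact ⟨X * r, by rw [hr, map_add, expand_X, map_one]; ring⟩
  -- compare the coefficients of `X ^ (p * K)` in `((X + 1) ^ p) ^ N` and `(X ^ p + 1) ^ N`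
  have h := pow_succ_dvd_pow_sub_pow hfrob hN
  rw [← pow_mul, ← map_pow, ← map_natCast C, ← map_pow, C_dvd_iff_dvd_coeff] at h
  simpa only [coeff_sub, coeff_X_add_one_pow, coeff_expand hp.pos, dvd_mul_right, if_true,
    Nat.mul_div_cancel_left K hp.pos] using h (p * K)

theorem Nat.pow_succ_dvd_multinomial_mul_sub {ι : Type*} {p : ℕ} (hp : p.Prime) (s : Finset ι)
    (f : ι → ℕ) {j : ℕ} (hj : p ^ j ∣ ∑ i ∈ s, f i) :
    (p : ℤ) ^ (j + 1) ∣ (multinomial s (fun i => p * f i) : ℤ) - multinomial s f := by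
  classical
  induction s using Finset.induction_on generalizing j with
  | empty => simp
  | @insert a s ha ih =>
    rw [sum_insert ha] at hj
    rw [multinomial_insert ha, multinomial_insert ha, ← Finset.mul_sum, ← mul_add]
    set N := f a + ∑ i ∈ s, f i with hN_def
    have hsplit : (((p * N).choose (p * f a) * multinomial s (fun i => p * f i) : ℕ) : ℤ) -
        (N.choose (f a) * multinomial s f : ℕ) =
        (((p * N).choose (p * f a) : ℤ) - N.choose (f a)) * multinomial s (fun i => p * f i) +
        N.choose (f a) * ((multinomial s (fun i => p * f i) : ℤ) - multinomial s f) := by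
      push_cast; ring
    rw [hsplit]
    refine dvd_add ((pow_succ_dvd_choose_mul_sub_choose hp hj (f a)).mul_right _) ?_
    -- `N ∣ (N choose S) * S` for `S = ∑ i ∈ s, f i`; the `p`-part of `S` is paid for by `ih`.
    have hN : p ^ j ∣ N.choose (f a) * ∑ i ∈ s, f i :=
      hj.trans (by rw [hN_def, choose_symm_add]; exact dvd_choose_mul _ _)
    obtain ⟨i, hi, hji⟩ := exists_pow_dvd_and_pow_dvd_mul_pow hp hN
    have hji' : (p : ℤ) ^ j ∣ N.choose (f a) * (p : ℤ) ^ i := by exact_mod_cast hji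
    rw [pow_succ]
    refine (mul_dvd_mul_right hji' _).trans ?_
    rw [mul_assoc, ← pow_succ]
    exact mul_dvd_mul_left _ (ih hi)

theorem pow_dvd_multinomial_mul_pow_sub {R ι : Type*} [CommRing R] {s : Finset ι} {f : ι → ℕ}
    {p e : ℕ} (hp : p.Prime) (hgcd : s.gcd f = 1) (he : e ≠ 0) {X Y : R}
    (hXY : (p : R) ∣ Y - X ^ p) :
    (p : R) ^ ((e * ∑ i ∈ s, f i).factorization p + 1) ∣
      (Nat.multinomial s (fun i => p * e * f i) : R) * X ^ (p * e) -
        (Nat.multinomial s (fun i => e * f i) : R) * Y ^ e := by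
  have hsplit : (Nat.multinomial s (fun i => p * e * f i) : R) * X ^ (p * e) -
      (Nat.multinomial s (fun i => e * f i) : R) * Y ^ e =
      (((Nat.multinomial s (fun i => p * (e * f i)) : ℤ) -
          Nat.multinomial s (fun i => e * f i) : ℤ) : R) * X ^ (p * e) +
        (Nat.multinomial s (fun i => e * f i) : R) * ((X ^ p) ^ e - Y ^ e) := by
    simp only [mul_assoc]
    push_cast
    ring
  rw [hsplit]
  refine dvd_add (Dvd.dvd.mul_right ?_ _) ?_
  · have h := Nat.pow_succ_dvd_multinomial_mul_sub hp s (fun i => e * f i)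
      (by rw [← Finset.mul_sum]; exact Nat.ordProj_dvd _ p)
    exact_mod_cast Int.cast_dvd_cast _ _ h
  · rw [Nat.factorization_mul he (Nat.sum_ne_zero_of_gcd_eq_one hgcd), Finsupp.add_apply,
      add_right_comm, pow_add, mul_comm]
    refine mul_dvd_mul ?_ (pow_succ_dvd_pow_sub_pow (dvd_sub_comm.mp hXY) (Nat.ordProj_dvd e p))
    exact_mod_cast Nat.cast_dvd_cast
      ((Nat.ordProj_dvd _ p).trans (Nat.sum_dvd_multinomial_mul_of_gcd_eq_one hgcd he))

theorem Nat.sum_divisors_moebius_smul_eq_sum_sub {M : Type*} [AddCommGroup M] {p k : ℕ}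
    (hp : p.Prime) (hpk : p ∣ k) (F : ℕ → M) :
    ∑ t ∈ k.divisors, moebius t • F t =
      ∑ t ∈ (k / p).divisors with ¬ p ∣ t, moebius t • (F t - F (p * t)) := by
  obtain ⟨m, rfl⟩ := hpk
  rw [Nat.mul_div_cancel_left m hp.pos, ← sum_filter_add_sum_filter_not _ (p ∣ ·)]
  have hcoprime : (p * m).divisors.filter (¬ p ∣ ·) = m.divisors.filter (¬ p ∣ ·) := by
    ext t
    simp only [mem_filter, mem_divisors, mul_ne_zero_iff, hp.ne_zero, ne_eq,
      not_false_eq_true, true_and]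
    exact and_congr_left fun hpt =>
      and_congr_left fun _ => ((hp.coprime_iff_not_dvd.2 hpt).symm.dvd_mul_left)
  have hmultiple : (p * m).divisors.filter (p ∣ ·) = m.divisors.image (p * ·) := by
    ext t
    simp only [mem_filter, mem_image, mem_divisors]
    constructor
    · rintro ⟨⟨htk, hk⟩, u, rfl⟩
      exact ⟨u, ⟨Nat.dvd_of_mul_dvd_mul_left hp.pos htk, right_ne_zero_of_mul hk⟩, rfl⟩
    · rintro ⟨u, ⟨hu, hm⟩, rfl⟩
      exact ⟨⟨mul_dvd_mul_left p hu, mul_ne_zero hp.ne_zero hm⟩, dvd_mul_right p u⟩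
  have hsquarefree : ∑ u ∈ m.divisors, moebius (p * u) • F (p * u) =
      ∑ u ∈ m.divisors with ¬ p ∣ u, -(moebius u • F (p * u)) := by
    rw [← sum_filter_of_ne (p := (¬ p ∣ ·))]
    · refine sum_congr rfl fun u hu => ?_
      rw [isMultiplicative_moebius.map_mul_of_coprime
        (hp.coprime_iff_not_dvd.2 (mem_filter.1 hu).2), moebius_apply_prime hp, neg_one_mul,
        neg_smul]
    · rintro u - hne ⟨v, rfl⟩
      refine hne ?_
      rw [moebius_eq_zero_of_not_squarefree, zero_smul]
      exact fun h => hp.not_isUnit (h p (by rw [← mul_assoc]; exact dvd_mul_right _ _))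
  rw [hcoprime, hmultiple, sum_image fun _ _ _ _ => Nat.eq_of_mul_eq_mul_left hp.pos,
    hsquarefree, ← sum_add_distrib]
  exact sum_congr rfl fun u _ => by rw [smul_sub]; abel

theorem natCast_dvd_of_forall_pow_factorization_dvd {R : Type*} [CommRing R] {m : ℕ} (hm : m ≠ 0)
    {x : R} (h : ∀ p : ℕ, p.Prime → (p : R) ^ m.factorization p ∣ x) : (m : R) ∣ x := by
  rw [← Nat.prod_factorization_pow_eq_self hm, Finsupp.prod, Nat.support_factorization,
    Nat.cast_prod]
  refine Finset.prod_dvd_of_coprime ?_ fun p hp => by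
    exact_mod_cast h p (Nat.prime_of_mem_primeFactors hp)
  intro p hp q hq hpq
  have hco : Nat.Coprime (p ^ m.factorization p) (q ^ m.factorization q) :=
    Nat.Coprime.pow _ _ ((Nat.coprime_primes (Nat.prime_of_mem_primeFactors hp)
      (Nat.prime_of_mem_primeFactors hq)).2 hpq)
  simpa [Function.onFun] using (Nat.isCoprime_iff_coprime.2 hco).map (Int.castRingHom R)

theorem Nat.sum_divisors_div_swap {M : Type*} [AddCommMonoid M] (n : ℕ) (f : ℕ → ℕ → M) :
    ∑ d ∈ n.divisors, f (n / d) d = ∑ d ∈ n.divisors, f d (n / d) :=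
  (sum_divisorsAntidiagonal' f).symm.trans (sum_divisorsAntidiagonal f)

theorem pow_dvd_sum_moebius_smul_multinomial_mul_pow {R ι : Type*} [CommRing R]
    {s : Finset ι} {f : ι → ℕ} (hgcd : s.gcd f = 1) {Ψ : ℕ → R →+* R}
    (hcomp : ∀ k m, (Ψ k).comp (Ψ m) = Ψ (k * m)) {p : ℕ} (hp : p.Prime)
    (hfrob : ∀ x : R, (p : R) ∣ Ψ p x - x ^ p) (m : ℕ) (G : R) :
    (p : R) ^ (p * m * ∑ i ∈ s, f i).factorization p ∣
      ∑ t ∈ (p * m).divisors,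
        moebius t • ((Nat.multinomial s fun i => p * m / t * f i : R) * Ψ t G ^ (p * m / t)) := by
  rw [Nat.sum_divisors_moebius_smul_eq_sum_sub hp (dvd_mul_right p m),
    Nat.mul_div_cancel_left m hp.pos]
  refine dvd_sum fun t ht => ?_
  obtain ⟨htm, hpt⟩ := mem_filter.1 ht
  obtain ⟨e, rfl⟩ := Nat.dvd_of_mem_divisors htm
  obtain ⟨ht0, he0⟩ := mul_ne_zero_iff.1 (Nat.mem_divisors.1 htm).2
  have hv : (p * (t * e) * ∑ i ∈ s, f i).factorization p =
      (e * ∑ i ∈ s, f i).factorization p + 1 := by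
    have hes := mul_ne_zero he0 (Nat.sum_ne_zero_of_gcd_eq_one hgcd)
    rw [show p * (t * e) * ∑ i ∈ s, f i = t * (p * (e * ∑ i ∈ s, f i)) by ring,
      Nat.factorization_mul ht0 (mul_ne_zero hp.ne_zero hes), Nat.factorization_mul hp.ne_zero hes]
    simp [Nat.factorization_eq_zero_of_not_dvd hpt, hp.factorization_self, add_comm]
  have hdiv : p * (t * e) / t = p * e := by
    rw [mul_left_comm, Nat.mul_div_cancel_left _ (Nat.pos_of_ne_zero ht0)]
  have hdiv_mul : p * (t * e) / (p * t) = e := by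
    rw [← mul_assoc, Nat.mul_div_cancel_left _ (Nat.mul_pos hp.pos (Nat.pos_of_ne_zero ht0))]
  rw [hv, hdiv, hdiv_mul, zsmul_eq_mul, ← hcomp, RingHom.comp_apply]
  exact dvd_mul_of_dvd_right (pow_dvd_multinomial_mul_pow_sub hp hgcd he0 (hfrob _)) _

theorem stmt_7_general {R : Type*} [CommRing R] (Ψ : ℕ → R →+* R)
    (hcomp : ∀ k m, (Ψ k).comp (Ψ m) = Ψ (k * m))
    (hfrob : ∀ p : ℕ, p.Prime → ∀ x : R, (p : R) ∣ Ψ p x - x ^ p)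
    (ℓ : ℕ) (n : Fin ℓ → ℕ) (hgcd : Finset.univ.gcd n = 1)
    (G : R) (k : ℕ) (hk : 1 ≤ k) :
    ((k * ∑ i, n i : ℕ) : R) ∣
      ∑ k' ∈ k.divisors,
        ((moebius (k / k') : ℤ) : R) *
          ((Nat.multinomial Finset.univ fun i => k' * n i : ℕ) : R) *
          Ψ (k / k') G ^ k' := by
  have hk0 : k ≠ 0 := Nat.one_le_iff_ne_zero.1 hk
  have hs := Nat.sum_ne_zero_of_gcd_eq_one hgcd
  rw [Nat.sum_divisors_div_swap k fun t k' => ((moebius t : ℤ) : R) *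
    ((Nat.multinomial univ fun i => k' * n i : ℕ) : R) * Ψ t G ^ k']
  simp_rw [mul_assoc, ← zsmul_eq_mul]
  refine natCast_dvd_of_forall_pow_factorization_dvd (mul_ne_zero hk0 hs) fun p hp => ?_
  by_cases hpk : p ∣ k
  · obtain ⟨m, rfl⟩ := hpk
    exact pow_dvd_sum_moebius_smul_multinomial_mul_pow hgcd hcomp hp (hfrob p hp) m G
  · rw [Nat.factorization_mul hk0 hs, Finsupp.add_apply, Nat.factorization_eq_zero_of_not_dvd hpk,
      zero_add]
    refine dvd_sum fun t ht => ?_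
    have hkt : k / t ≠ 0 := (Nat.div_pos (Nat.divisor_le ht) (Nat.pos_of_mem_divisors ht)).ne'
    rw [zsmul_eq_mul]
    refine dvd_mul_of_dvd_right (dvd_mul_of_dvd_left ?_ _) _
    exact_mod_cast Nat.cast_dvd_cast
      ((Nat.ordProj_dvd _ p).trans (Nat.sum_dvd_multinomial_mul_of_gcd_eq_one hgcd hkt))

/-- Let `R` be a commutative ring with Adams operations `Ψ_k` (ring endomorphisms with
`Ψ_1 = id`, `Ψ_k Ψ_m = Ψ_{km}`, and `Ψ_p x ≡ x^p mod p` for all primes `p`).  Let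
`n = (n_1, …, n_ℓ)` be positive integers with gcd `1`, `G ∈ R` and `k ≥ 1`.  Then
`∑_{k'|k} μ(k/k') ((k'|n|)!/∏_i (k' n_i)!) (Ψ_{k/k'} G)^{k'}` lies in `k|n|·R`. -/
theorem stmt_7 {R : Type*} [CommRing R] (Ψ : ℕ → R →+* R)
    (h1 : Ψ 1 = RingHom.id R)
    (hcomp : ∀ k m, (Ψ k).comp (Ψ m) = Ψ (k * m))
    (hfrob : ∀ p : ℕ, p.Prime → ∀ x : R, (p : R) ∣ Ψ p x - x ^ p)
    (ℓ : ℕ) (n : Fin ℓ → ℕ) (hpos : ∀ i, 0 < n i) (hgcd : Finset.univ.gcd n = 1)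
    (G : R) (k : ℕ) (hk : 1 ≤ k) :
    ((k * ∑ i, n i : ℕ) : R) ∣
      ∑ k' ∈ k.divisors,
        ((moebius (k / k') : ℤ) : R) *
          ((Nat.multinomial Finset.univ fun i => k' * n i : ℕ) : R) *
          Ψ (k / k') G ^ k' :=
  stmt_7_general Ψ hcomp hfrob ℓ n hgcd G k hk
end

section
/- Expansion of the plethystic logarithm coefficients: with G = 1 + Σ_{d≥1} G_d Q^d in R⟦Q⟧ and Log(G) = Σ_d Ω_d Q^d, one has for each d ≥ 1: Ω_d = -Σ_{k | d} Σ_{n} (1/(k|n|)) Σ_{k'|k} μ(k/k') · ((k'|n|)!/∏_δ (k' n_δ)!) · ((-1)^{|n|} ∏_δ Ψ_{k/k'}(G_δ^{n_δ}))^{k'}, where the middle sum runs over multiplicity vectors n = (n_δ)_{1≤δ≤d/k}, n_δ ≥ 0, with Σ_δ n_δ · δ = d/k and gcd of the nonzero n_δ equal to 1, and |n| = Σ_δ n_δ. -/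
/-!
Write `G - 1 = ∑_{δ ≥ 1} G_δ Q^δ`. Modulo `Q^(m+1)` only `δ ≤ m` matter, so the multinomial theorem
expresses the `Q^m`-coefficient of `log G = ∑_j (-1)^(j+1) (G - 1)^j / j` as a sum over
multiplicity vectors `n` of weight `∑ δ n_δ = m` of
`(-1)^(|n|+1) / |n| · multinomial(n) · ∏ G_δ^(n_δ)`.
Every such `n` is `e • n'` for `e = gcd n` and a unique primitive `n'` of weight `m / e`.
In `∑_{k ∣ d} μ(k)/k · Ψ_k(…)` the pairs `(k, e)` with `k e ∣ d` are re-indexed by `K = k e` and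
`k' = e`, and each summand is rearranged using only that `Ψ_k` is a ring homomorphism.
-/

open PowerSeries ArithmeticFunction

variable {R : Type*} [CommRing R] [Algebra ℚ R]

/-- Formal logarithm of a power series with constant term `1`. -/
noncomputable def logPS (G : PowerSeries R) : PowerSeries R :=
  PowerSeries.mk fun n =>
    ∑ m ∈ Finset.range (n + 1), ((-1 : ℚ) ^ (m + 1) * (m : ℚ)⁻¹) • coeff n ((G - 1) ^ m)

/-- The coefficient `Ω_d` of `Q^d` in the plethystic logarithm
`Log(G) = ∑_{k>0} (μ(k)/k) Ψ_k(log G)`. -/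
noncomputable def plethLogCoeff (Ψ : ℕ → R →+* R) (G : PowerSeries R) (d : ℕ) : R :=
  ∑ k ∈ d.divisors, ((moebius k : ℚ) * (k : ℚ)⁻¹) • Ψ k (coeff (d / k) (logPS G))

/-- Multiplicity vectors of `m`: functions `n : {1,…,m} → ℕ` (indexed by `Fin m`, with
`δ = i + 1`) satisfying `∑_δ n_δ · δ = m` and `gcd(n) = 1`. -/
def mults (m : ℕ) : Finset (Fin m → ℕ) :=
  (Fintype.piFinset fun _ => Finset.range (m + 1)).filter
    fun n => (∑ i : Fin m, (i.1 + 1) * n i) = m ∧ Finset.univ.gcd n = 1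

open Finset

namespace PowerSeries

theorem coeff_pow_eq_coeff_pow_of_X_pow_dvd_sub {A : Type*} [CommRing A] {f g : A⟦X⟧} {m : ℕ}
    (h : X ^ (m + 1) ∣ f - g) (j : ℕ) : coeff m (f ^ j) = coeff m (g ^ j) := by
  rw [← sub_eq_zero, ← map_sub]
  exact X_pow_dvd_iff.mp (h.trans (sub_dvd_pow_sub_pow f g j)) m (Nat.lt_succ_self m)

theorem coeff_sum_C_mul_X_pow_pow {A ι : Type*} [CommSemiring A] [DecidableEq ι] (s : Finset ι)
    (c : ι → A) (w : ι → ℕ) (m j : ℕ) :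
    coeff m ((∑ i ∈ s, C (c i) * X ^ w i) ^ j)
      = ∑ n ∈ piAntidiag s j with ∑ i ∈ s, w i * n i = m,
          (Nat.multinomial s n : A) * ∏ i ∈ s, c i ^ n i := by
  rw [sum_pow_eq_sum_piAntidiag, map_sum, sum_filter]
  refine sum_congr rfl fun n _ => ?_
  simp_rw [mul_pow, prod_mul_distrib, ← map_pow, ← map_prod, ← pow_mul, prod_pow_eq_pow_sum,
    ← map_natCast (C (R := A)), ← mul_assoc, ← map_mul, coeff_C_mul_X_pow, mul_comm (w _)]
  simp only [eq_comm]

end PowerSeries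

theorem Nat.sum_divisors_sum_divisors_div {M : Type*} [AddCommMonoid M] (d : ℕ) (f : ℕ → ℕ → M) :
    ∑ k ∈ d.divisors, ∑ e ∈ (d / k).divisors, f k e
      = ∑ K ∈ d.divisors, ∑ e ∈ K.divisors, f (K / e) e := by
  rw [sum_sigma', sum_sigma']
  refine sum_nbij' (fun p => ⟨p.1 * p.2, p.2⟩) (fun p => ⟨p.1 / p.2, p.2⟩) ?_ ?_ ?_ ?_ ?_
  · rintro ⟨k, e⟩ hp
    simp only [mem_sigma, Nat.mem_divisors] at hp ⊢
    obtain ⟨⟨⟨r, rfl⟩, hd⟩, ⟨s, hs⟩, -⟩ := hp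
    have hk : k ≠ 0 := left_ne_zero_of_mul hd
    rw [Nat.mul_div_cancel_left _ (Nat.pos_of_ne_zero hk)] at hs
    subst hs
    exact ⟨⟨⟨s, by ring⟩, hd⟩, dvd_mul_left e k, by simp_all⟩
  · rintro ⟨K, e⟩ hp
    simp only [mem_sigma, Nat.mem_divisors] at hp ⊢
    obtain ⟨⟨⟨r, rfl⟩, hd⟩, ⟨s, rfl⟩, hK⟩ := hp
    have he : 0 < e := Nat.pos_of_ne_zero (left_ne_zero_of_mul hK)
    have hs : 0 < s := Nat.pos_of_ne_zero (right_ne_zero_of_mul hK)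
    rw [Nat.mul_div_cancel_left _ he, mul_assoc, mul_left_comm, Nat.mul_div_cancel_left _ hs]
    have hr : r ≠ 0 := right_ne_zero_of_mul hd
    exact ⟨⟨dvd_mul_right s _, by positivity⟩, dvd_mul_right e r, by positivity⟩
  · rintro ⟨k, e⟩ hp
    simp only [mem_sigma, Nat.mem_divisors] at hp
    simp [Nat.mul_div_cancel _ (Nat.pos_of_mem_divisors (Nat.mem_divisors.mpr hp.2))]
  · rintro ⟨K, e⟩ hp
    simp only [mem_sigma, Nat.mem_divisors] at hp
    simp [Nat.div_mul_cancel hp.2.1]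
  · rintro ⟨k, e⟩ hp
    simp only [mem_sigma, Nat.mem_divisors] at hp
    simp [Nat.mul_div_cancel _ (Nat.pos_of_mem_divisors (Nat.mem_divisors.mpr hp.2))]

def padZero {m' m : ℕ} (n : Fin m' → ℕ) : Fin m → ℕ := fun i => if h : i.1 < m' then n ⟨i, h⟩ else 0

section padZero

variable {m' m : ℕ} (n : Fin m' → ℕ)

@[simp]
theorem padZero_castLE (h : m' ≤ m) (i : Fin m') : padZero n (Fin.castLE h i) = n i := by
  simp [padZero]

@[to_additive]
theorem prod_padZero {M : Type*} [CommMonoid M] (h : m' ≤ m) (F : Fin m → ℕ → M)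
    (hF : ∀ i, F i 0 = 1) : ∏ i, F i (padZero n i) = ∏ i, F (Fin.castLE h i) (n i) := by
  rw [← prod_subset (subset_univ (univ.map (Fin.castLEEmb h))), prod_map]
  · simp
  · intro i _ hi
    have : ¬ i.1 < m' := fun hlt => hi (mem_map.mpr ⟨⟨i, hlt⟩, mem_univ _, Fin.ext rfl⟩)
    simp [padZero, this, hF]

theorem gcd_padZero (h : m' ≤ m) : univ.gcd (padZero n : Fin m → ℕ) = univ.gcd n := by
  refine Nat.dvd_antisymm (dvd_gcd fun i _ => ?_) (dvd_gcd fun i _ => ?_)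
  · simpa using gcd_dvd (f := (padZero n : Fin m → ℕ)) (mem_univ (Fin.castLE h i))
  · unfold padZero
    split_ifs
    · exact gcd_dvd (mem_univ _)
    · exact dvd_zero _

theorem multinomial_padZero (h : m' ≤ m) :
    Nat.multinomial univ (padZero n : Fin m → ℕ) = Nat.multinomial univ n := by
  rw [Nat.multinomial, Nat.multinomial, sum_padZero n h (fun _ x => x) fun _ => rfl,
    prod_padZero n h (fun _ x => x.factorial) fun _ => Nat.factorial_zero]

end padZero

def weight {m : ℕ} (n : Fin m → ℕ) : ℕ := ∑ i, (i.1 + 1) * n i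

def allMults (m : ℕ) : Finset (Fin m → ℕ) :=
  {n ∈ Fintype.piFinset fun _ => range (m + 1) | weight n = m}

theorem sum_le_weight {m : ℕ} (n : Fin m → ℕ) : ∑ i, n i ≤ weight n :=
  sum_le_sum fun i _ => Nat.le_mul_of_pos_left _ i.1.succ_pos

theorem mul_le_of_weight_eq {m : ℕ} {n : Fin m → ℕ} (hn : weight n = m) (i : Fin m) :
    (i.1 + 1) * n i ≤ m :=
  (single_le_sum (f := fun i : Fin m => (i.1 + 1) * n i) (fun _ _ => Nat.zero_le _)
    (mem_univ i)).trans hn.le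

theorem mem_allMults {m : ℕ} {n : Fin m → ℕ} : n ∈ allMults m ↔ weight n = m := by
  simp only [allMults, mem_filter, Fintype.mem_piFinset, mem_range, and_iff_right_iff_imp]
  exact fun hn i =>
    Nat.lt_succ_of_le ((Nat.le_mul_of_pos_left _ i.1.succ_pos).trans (mul_le_of_weight_eq hn i))

theorem mults_eq_filter_allMults (m : ℕ) : mults m = {n ∈ allMults m | univ.gcd n = 1} := by
  rw [allMults, filter_filter]
  rfl

theorem gcd_dvd_of_weight_eq {m : ℕ} {n : Fin m → ℕ} (hn : weight n = m) : univ.gcd n ∣ m :=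
  (dvd_sum fun i _ => (gcd_dvd (mem_univ i)).mul_left _ : univ.gcd n ∣ weight n).trans (dvd_of_eq hn)

theorem weight_padZero_mul {m' m : ℕ} (h : m' ≤ m) (e : ℕ) (n : Fin m' → ℕ) :
    weight (padZero (fun i => e * n i) : Fin m → ℕ) = e * weight n := by
  rw [weight, sum_padZero _ h (fun i x => (i.1 + 1) * x) (fun _ => rfl), weight, mul_sum]
  exact sum_congr rfl fun i _ => by simp only [Fin.val_castLE]; ring

theorem gcd_padZero_mul {m' m : ℕ} (h : m' ≤ m) (e : ℕ) (n : Fin m' → ℕ) :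
    univ.gcd (padZero (fun i => e * n i) : Fin m → ℕ) = e * univ.gcd n := by
  rw [gcd_padZero _ h, Finset.gcd_mul_left, normalize_eq]

theorem padZero_mul_div_eq_self {m e : ℕ} {n : Fin m → ℕ} (hn : weight n = m)
    (hgcd : univ.gcd n = e) (he : 0 < e) :
    padZero (fun i : Fin (m / e) => e * (n (Fin.castLE (Nat.div_le_self m e) i) / e)) = n := by
  have hdvd : ∀ i, e ∣ n i := fun i => hgcd ▸ gcd_dvd (mem_univ i)
  funext i
  unfold padZero
  split_ifs with hi
  · exact Nat.mul_div_cancel' (hdvd _)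
  · -- a nonzero entry is a multiple of `e`, so its part size `i + 1` is at most `m / e`
    by_contra hni
    have hen : e ≤ n i := Nat.le_of_dvd (Nat.pos_of_ne_zero (Ne.symm hni)) (hdvd i)
    have : (i.1 + 1) * e ≤ m := (Nat.mul_le_mul_left _ hen).trans (mul_le_of_weight_eq hn i)
    exact hi (Nat.lt_of_succ_le ((Nat.le_div_iff_mul_le he).mpr this))

theorem sum_allMults_filter_gcd_eq {M : Type*} [AddCommMonoid M] {m e : ℕ} (he : e ∈ m.divisors)
    (f : (Fin m → ℕ) → M) :
    ∑ n ∈ allMults m with univ.gcd n = e, f n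
      = ∑ n ∈ mults (m / e), f (padZero fun i => e * n i) := by
  have he0 := Nat.pos_of_mem_divisors he
  have hem : e * (m / e) = m := Nat.mul_div_cancel' (Nat.dvd_of_mem_divisors he)
  have hle := Nat.div_le_self m e
  refine sum_nbij' (fun n i => n (Fin.castLE hle i) / e) (fun n => padZero fun i => e * n i)
    ?_ ?_ ?_ ?_ ?_
  · intro n hn
    simp only [mem_filter, mem_allMults] at hn
    have hpad := padZero_mul_div_eq_self hn.1 hn.2 he0
    rw [mults_eq_filter_allMults, mem_filter, mem_allMults]
    refine ⟨Nat.eq_of_mul_eq_mul_left he0 ?_, Nat.eq_of_mul_eq_mul_left he0 ?_⟩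
    · rw [← weight_padZero_mul hle, hpad, hn.1, hem]
    · rw [← gcd_padZero_mul hle, hpad, hn.2, mul_one]
  · intro n hn
    rw [mults_eq_filter_allMults, mem_filter, mem_allMults] at hn
    simp only [mem_filter, mem_allMults]
    rw [weight_padZero_mul hle, gcd_padZero_mul hle, hn.1, hn.2, hem, mul_one]
    exact ⟨rfl, rfl⟩
  · intro n hn
    simp only [mem_filter, mem_allMults] at hn
    exact padZero_mul_div_eq_self hn.1 hn.2 he0
  · intro n _
    funext i
    simp [Nat.mul_div_cancel_left _ he0]
  · intro n hn
    simp only [mem_filter, mem_allMults] at hn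
    rw [padZero_mul_div_eq_self hn.1 hn.2 he0]

theorem sum_allMults_eq_sum_divisors {M : Type*} [AddCommMonoid M] {m : ℕ} (hm : m ≠ 0)
    (f : (Fin m → ℕ) → M) :
    ∑ n ∈ allMults m, f n = ∑ e ∈ m.divisors, ∑ n ∈ mults (m / e), f (padZero fun i => e * n i) := by
  have hmaps : ∀ n ∈ allMults m, univ.gcd n ∈ m.divisors := fun n hn =>
    Nat.mem_divisors.mpr ⟨gcd_dvd_of_weight_eq (mem_allMults.mp hn), hm⟩
  rw [← sum_fiberwise_of_maps_to hmaps]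
  exact sum_congr rfl fun e he => sum_allMults_filter_gcd_eq he f

section Expansion

variable {A : Type*} [CommRing A]

theorem coeff_sub_one_pow (G : ℕ → A) (m j : ℕ) :
    coeff m (((PowerSeries.mk fun i => if i = 0 then 1 else G i) - 1) ^ j)
      = ∑ n ∈ piAntidiag univ j with weight n = m,
          (Nat.multinomial univ n : A) * ∏ i : Fin m, G (i + 1) ^ n i := by
  rw [coeff_pow_eq_coeff_pow_of_X_pow_dvd_sub (g := ∑ i : Fin m, C (G (i + 1)) * X ^ (i.1 + 1)),
    coeff_sum_C_mul_X_pow_pow]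
  · rfl
  rw [X_pow_dvd_iff]
  intro k hk
  rcases k with _ | k
  · simp
  · have hsum : ∑ i : Fin m, (if k = i.1 then G (i.1 + 1) else 0) = G (k + 1) := by
      rw [Fintype.sum_eq_single ⟨k, by omega⟩ fun i hi => if_neg fun h => hi (Fin.ext h.symm)]
      simp
    simp [coeff_X_pow, hsum]

end Expansion

theorem coeff_logPS_eq_sum_allMults (G : ℕ → R) (m : ℕ) :
    coeff m (logPS (PowerSeries.mk fun i => if i = 0 then 1 else G i))
      = ∑ n ∈ allMults m, ((-1 : ℚ) ^ (∑ i, n i + 1) * ((∑ i, n i : ℕ) : ℚ)⁻¹) •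
          ((Nat.multinomial univ n : R) * ∏ i : Fin m, G (i + 1) ^ n i) := by
  have hmaps : ∀ n ∈ allMults m, ∑ i, n i ∈ range (m + 1) := fun n hn =>
    mem_range_succ_iff.mpr ((sum_le_weight n).trans (mem_allMults.mp hn).le)
  rw [logPS, coeff_mk, ← sum_fiberwise_of_maps_to hmaps]
  refine sum_congr rfl fun j _ => ?_
  rw [coeff_sub_one_pow, smul_sum]
  refine sum_congr ?_ fun n hn => ?_
  · ext n
    simp [mem_allMults, and_comm]
  · rw [(mem_filter.mp hn).2]

theorem coeff_logPS_eq_sum_divisors_sum_mults (G : ℕ → R) {m : ℕ} (hm : m ≠ 0) :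
    coeff m (logPS (PowerSeries.mk fun i => if i = 0 then 1 else G i))
      = ∑ e ∈ m.divisors, ∑ n ∈ mults (m / e),
          ((-1 : ℚ) ^ (e * ∑ i, n i + 1) * ((e * ∑ i, n i : ℕ) : ℚ)⁻¹) •
            ((Nat.multinomial univ (fun i => e * n i) : R) *
              ∏ i : Fin (m / e), G (i + 1) ^ (e * n i)) := by
  rw [coeff_logPS_eq_sum_allMults, sum_allMults_eq_sum_divisors hm]
  refine sum_congr rfl fun e _ => sum_congr rfl fun n _ => ?_
  have hle := Nat.div_le_self m e
  rw [sum_padZero _ hle (fun _ x => x) fun _ => rfl, multinomial_padZero _ hle,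
    prod_padZero _ hle (fun i x => G (i + 1) ^ x) fun _ => pow_zero _, mul_sum]
  rfl

theorem smul_map_coeff_logPS (ψ : R →+* R) (q : ℚ) (G : ℕ → R) {m : ℕ} (hm : m ≠ 0) :
    q • ψ (coeff m (logPS (PowerSeries.mk fun i => if i = 0 then 1 else G i)))
      = ∑ e ∈ m.divisors, ∑ n ∈ mults (m / e),
          q • (((-1 : ℚ) ^ (e * ∑ i, n i + 1) * ((e * ∑ i, n i : ℕ) : ℚ)⁻¹) •
            ((Nat.multinomial univ (fun i => e * n i) : R) *
              (∏ i : Fin (m / e), ψ (G (i + 1) ^ n i)) ^ e)) := by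
  rw [coeff_logPS_eq_sum_divisors_sum_mults G hm, map_sum, smul_sum]
  refine sum_congr rfl fun e _ => ?_
  rw [map_sum, smul_sum]
  refine sum_congr rfl fun n _ => ?_
  rw [map_rat_smul, map_mul, map_natCast, map_prod, ← prod_pow]
  simp only [← map_pow, ← pow_mul, mul_comm e]

theorem plethLog_summand_eq (μ : ℤ) (M k e S : ℕ) (u : R) :
    ((μ : ℚ) * (k : ℚ)⁻¹) • (((-1 : ℚ) ^ (e * S + 1) * ((e * S : ℕ) : ℚ)⁻¹) • ((M : R) * u ^ e))
      = -((((k * e : ℕ) : ℚ) * (S : ℚ))⁻¹ • ((μ : R) * (M : R) * ((-1 : R) ^ S * u) ^ e)) := by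
  have hsign : (μ : R) * (M : R) * ((-1 : R) ^ S * u) ^ e
      = ((μ : ℚ) * (-1 : ℚ) ^ (e * S)) • ((M : R) * u ^ e) := by
    rw [Algebra.smul_def, map_mul, map_pow, map_neg, map_one, map_intCast, mul_pow, ← pow_mul,
      mul_comm S e]
    ring
  rw [hsign, smul_smul, smul_smul, ← neg_smul, pow_succ]
  congr 1
  push_cast
  ring

theorem stmt_19_general (Ψ : ℕ → R →+* R) (G : ℕ → R) (d : ℕ) :
    plethLogCoeff Ψ (PowerSeries.mk fun m => if m = 0 then 1 else G m) d
      = - ∑ k ∈ d.divisors, ∑ n ∈ mults (d / k),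
          ((k : ℚ) * ((∑ i, n i : ℕ) : ℚ))⁻¹ •
            ∑ k' ∈ k.divisors,
              ((moebius (k / k') : ℤ) : R) *
                ((Nat.multinomial Finset.univ fun i => k' * n i : ℕ) : R) *
                ((-1 : R) ^ (∑ i, n i) * ∏ i : Fin (d / k), Ψ (k / k') (G (i.1 + 1) ^ n i)) ^ k' := by
  have hdiv : ∀ k ∈ d.divisors, d / k ≠ 0 := fun k hk =>
    (Nat.div_pos (Nat.divisor_le hk) (Nat.pos_of_mem_divisors hk)).ne'
  rw [plethLogCoeff, sum_congr rfl fun k hk => smul_map_coeff_logPS (Ψ k) _ G (hdiv k hk),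
    Nat.sum_divisors_sum_divisors_div, ← sum_neg_distrib]
  refine sum_congr rfl fun K _ => ?_
  have hdvd : ∀ e ∈ K.divisors, e ∣ K := fun e he => Nat.dvd_of_mem_divisors he
  rw [sum_congr rfl fun e he => by rw [Nat.div_div_eq_div_mul, Nat.div_mul_cancel (hdvd e he)],
    sum_comm, ← sum_neg_distrib]
  refine sum_congr rfl fun n _ => ?_
  rw [smul_sum, ← sum_neg_distrib]
  refine sum_congr rfl fun e he => ?_
  rw [plethLog_summand_eq, Nat.div_mul_cancel (hdvd e he)]

/-- Expansion of the plethystic logarithm coefficients: with `G = 1 + ∑_{d≥1} G_d Q^d` and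
`Log(G) = ∑_d Ω_d Q^d`, for each `d ≥ 1`:
`Ω_d = -∑_{k|d} ∑_n (1/(k|n|)) ∑_{k'|k} μ(k/k') ((k'|n|)!/∏_δ (k' n_δ)!) ·
  ((-1)^{|n|} ∏_δ Ψ_{k/k'}(G_δ^{n_δ}))^{k'}`,
the middle sum being over multiplicity vectors `n` of `d/k` with `gcd(n) = 1`. -/
theorem stmt_19 (Ψ : ℕ → R →+* R)
    (h1 : Ψ 1 = RingHom.id R)
    (hcomp : ∀ k m, (Ψ k).comp (Ψ m) = Ψ (k * m))
    (G : ℕ → R) (d : ℕ) (hd : 0 < d) :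
    plethLogCoeff Ψ (PowerSeries.mk fun m => if m = 0 then 1 else G m) d
      = - ∑ k ∈ d.divisors, ∑ n ∈ mults (d / k),
          ((k : ℚ) * ((∑ i, n i : ℕ) : ℚ))⁻¹ •
            ∑ k' ∈ k.divisors,
              ((moebius (k / k') : ℤ) : R) *
                ((Nat.multinomial Finset.univ fun i => k' * n i : ℕ) : R) *
                ((-1 : R) ^ (∑ i, n i) * ∏ i : Fin (d / k), Ψ (k / k') (G (i.1 + 1) ^ n i)) ^ k' :=
  stmt_19_general Ψ G d
end
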